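/- arXiv:1602.06843 — 2 statements merged into one kernel-verified Lean document; each statement's English description precedes it below -/
import Mathlib

section
/- Assume the Riemann hypothesis. If α in the critical strip S is a zero of ζ of order m ≥ 2, then the holomorphic extension F of ν_ζ(z) = z − ζ(z)/(z ζ'(z)) at α satisfies F(α) = α, F'(α) = 1 − 1/(mα), |F'(α) − 1/2| ≤ 1/2, and |F'(α)| < 1; that is, α is an attracting fixed point of ν_ζ. -/
/-!
Near a zero `α ≠ 0` of order `m` of `f = (z - α)^m h`, the quotient `f / (z f')` equals
`(z - α) g(z)` with `g = h / (z (m h + (z - α) h'))` holomorphic at `α` and `g(α) = 1/(mα)`.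
So `ν_f(z) = z - (z - α) g(z)` extends holomorphically across `α`, with `F(α) = α` and
`F'(α) = 1 - g(α) = 1 - 1/(mα)`.

Under RH, `Re α = 1/2`, so `w = mα` has `Re w = m/2 ≥ 1`. For real `a > 0` one has
`|w - a|² = |w|² - 2a Re w + a²`, so `|w - 2| ≤ |w|` and `|w - 1| < |w|`; these say
`|(1 - 1/w) - 1/2| ≤ 1/2` and `|1 - 1/w| < 1`.
-/

open Complex

/-- The nu function of the Riemann zeta function: `ν_ζ(z) = z - ζ(z)/(z ζ'(z))`. -/
noncomputable def nuZeta (z : ℂ) : ℂ := z - riemannZeta z / (z * deriv riemannZeta z)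

theorem sq_norm_sub_ofReal (w : ℂ) (a : ℝ) : ‖w - a‖ ^ 2 = ‖w‖ ^ 2 - 2 * a * w.re + a ^ 2 := by
  simp only [Complex.sq_norm, normSq_apply, sub_re, sub_im, ofReal_re, ofReal_im]
  ring

theorem norm_sub_ofReal_le_norm {w : ℂ} {a : ℝ} (ha : 0 ≤ a) (h : a ≤ 2 * w.re) :
    ‖w - a‖ ≤ ‖w‖ := by
  rw [← sq_le_sq₀ (norm_nonneg _) (norm_nonneg _), sq_norm_sub_ofReal]
  nlinarith

theorem norm_sub_ofReal_lt_norm {w : ℂ} {a : ℝ} (ha : 0 < a) (h : a < 2 * w.re) :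
    ‖w - a‖ < ‖w‖ := by
  rw [← sq_lt_sq₀ (norm_nonneg _) (norm_nonneg _), sq_norm_sub_ofReal]
  nlinarith

theorem norm_one_sub_one_div_sub_half_le {w : ℂ} (hw : 1 ≤ w.re) :
    ‖1 - 1 / w - 1 / 2‖ ≤ 1 / 2 := by
  have hw0 : w ≠ 0 := by rintro rfl; simp at hw; linarith
  have hdiv : 1 - 1 / w - 1 / 2 = (w - (2 : ℝ)) / (2 * w) := by
    field_simp
    push_cast
    ring
  have hnorm := norm_sub_ofReal_le_norm (w := w) (a := 2) zero_le_two (by linarith)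
  rw [hdiv, norm_div, norm_mul, Complex.norm_two, div_le_iff₀ (by positivity)]
  linarith

theorem norm_one_sub_one_div_lt_one {w : ℂ} (hw : 1 / 2 < w.re) : ‖1 - 1 / w‖ < 1 := by
  have hw0 : w ≠ 0 := by rintro rfl; simp at hw; linarith
  have hdiv : 1 - 1 / w = (w - (1 : ℝ)) / w := by
    field_simp
    push_cast
    ring
  rw [hdiv, norm_div, div_lt_one (norm_pos_iff.mpr hw0)]
  exact norm_sub_ofReal_lt_norm one_pos (by linarith)

theorem hasDerivAt_sub_sub_mul {g : ℂ → ℂ} {α : ℂ} (hg : DifferentiableAt ℂ g α) :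
    HasDerivAt (fun z => z - (z - α) * g z) (1 - g α) α := by
  simpa using (hasDerivAt_id α).fun_sub (((hasDerivAt_id α).sub_const α).fun_mul hg.hasDerivAt)

section ZeroOfOrder

variable {f h : ℂ → ℂ} {U : Set ℂ} {α : ℂ} {m : ℕ}

theorem deriv_eq_pow_mul_of_eqOn_pow_mul (hU : IsOpen U)
    (hfact : ∀ z ∈ U, f z = (z - α) ^ m * h z) (hm : m ≠ 0) {z : ℂ} (hz : z ∈ U)
    (hhz : DifferentiableAt ℂ h z) :
    deriv f z = (z - α) ^ (m - 1) * (m * h z + (z - α) * deriv h z) := by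
  have hf : f =ᶠ[nhds z] fun w => (w - α) ^ m * h w :=
    Filter.eventuallyEq_of_mem (hU.mem_nhds hz) hfact
  have hpow : HasDerivAt (fun w => (w - α) ^ m) (m * (z - α) ^ (m - 1) * 1) z :=
    ((hasDerivAt_id z).sub_const α).pow m
  rw [hf.deriv_eq, (hpow.fun_mul hhz.hasDerivAt).deriv]
  obtain ⟨k, rfl⟩ := Nat.exists_eq_succ_of_ne_zero hm
  simp only [Nat.succ_sub_one, pow_succ]
  ring

theorem div_mul_deriv_eq_of_eqOn_pow_mul (hU : IsOpen U) (hh : DifferentiableOn ℂ h U)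
    (hfact : ∀ z ∈ U, f z = (z - α) ^ m * h z) (hm : m ≠ 0) {z : ℂ} (hz : z ∈ U)
    (hzα : z ≠ α) :
    f z / (z * deriv f z) = (z - α) * (h z / (z * (m * h z + (z - α) * deriv h z))) := by
  rw [deriv_eq_pow_mul_of_eqOn_pow_mul hU hfact hm hz (hh.differentiableAt (hU.mem_nhds hz)),
    hfact z hz]
  obtain ⟨k, rfl⟩ := Nat.exists_eq_succ_of_ne_zero hm
  rw [Nat.succ_sub_one, pow_succ, mul_left_comm z, mul_assoc, ← mul_div_assoc,
    mul_div_mul_left _ _ (pow_ne_zero _ (sub_ne_zero.mpr hzα))]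

theorem exists_extension_sub_div_mul_deriv (hU : IsOpen U) (hαU : α ∈ U)
    (hh : DifferentiableOn ℂ h U) (hhα : h α ≠ 0) (hfact : ∀ z ∈ U, f z = (z - α) ^ m * h z)
    (hm : m ≠ 0) (hα : α ≠ 0) :
    ∃ (F : ℂ → ℂ) (V : Set ℂ), IsOpen V ∧ α ∈ V ∧ DifferentiableOn ℂ F V ∧
      (∀ z ∈ V, z ≠ α → F z = z - f z / (z * deriv f z)) ∧
      F α = α ∧ deriv F α = 1 - 1 / (m * α) := by
  set g : ℂ → ℂ := fun z => h z / (z * (m * h z + (z - α) * deriv h z))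
  have hgα : g α = 1 / (m * α) := by
    simp only [g, sub_self, zero_mul, add_zero]
    field_simp
  have hhan : AnalyticAt ℂ h α := hh.analyticOnNhd hU α hαU
  have hg : AnalyticAt ℂ g α := by
    refine hhan.div (analyticAt_id.mul ((analyticAt_const.mul hhan).add
      ((analyticAt_id.sub analyticAt_const).mul hhan.deriv))) ?_
    simp [hα, hm, hhα]
  refine ⟨fun z => z - (z - α) * g z, U ∩ {z | AnalyticAt ℂ g z},
    hU.inter (isOpen_analyticAt ℂ g), ⟨hαU, hg⟩, ?_, ?_, by simp, ?_⟩
  · exact fun z hz => (differentiableAt_id.sub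
      ((differentiableAt_id.sub_const α).mul hz.2.differentiableAt)).differentiableWithinAt
  · intro z hz hzα
    rw [div_mul_deriv_eq_of_eqOn_pow_mul hU hh hfact hm hz.1 hzα]
  · rw [(hasDerivAt_sub_sub_mul hg.differentiableAt).deriv, hgα]

end ZeroOfOrder

/-- Under the Riemann hypothesis, a zero of `ζ` in the critical strip of order `m ≥ 2`
is an attracting fixed point of (the holomorphic extension of) `ν_ζ`, with multiplier
`λ = 1 - 1/(mα)` satisfying `|λ - 1/2| ≤ 1/2` and `|λ| < 1`. -/
theorem multiple_zero_attracting_of_RH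
    (RH : ∀ s : ℂ, 0 < s.re → s.re < 1 → riemannZeta s = 0 → s.re = 1 / 2)
    (α : ℂ) (hα₀ : 0 < α.re) (hα₁ : α.re < 1) (m : ℕ) (hm : 2 ≤ m)
    (h : ℂ → ℂ) (U : Set ℂ) (hU : IsOpen U) (hαU : α ∈ U)
    (hh : DifferentiableOn ℂ h U) (hhα : h α ≠ 0)
    (hfact : ∀ z ∈ U, riemannZeta z = (z - α) ^ m * h z) :
    ∃ (F : ℂ → ℂ) (V : Set ℂ), IsOpen V ∧ α ∈ V ∧ DifferentiableOn ℂ F V ∧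
      (∀ z ∈ V, z ≠ α → F z = nuZeta z) ∧
      F α = α ∧ deriv F α = 1 - 1 / (m * α) ∧
      ‖deriv F α - 1 / 2‖ ≤ 1 / 2 ∧ ‖deriv F α‖ < 1 := by
  have hm0 : m ≠ 0 := by omega
  have hre : α.re = 1 / 2 := RH α hα₀ hα₁ (by simp [hfact α hαU, hm0])
  have hα : α ≠ 0 := by rintro rfl; simp at hα₀
  obtain ⟨F, V, hV, hαV, hF, hFν, hFα, hF'⟩ :=
    exists_extension_sub_div_mul_deriv hU hαU hh hhα hfact hm0 hα
  have hw : 1 ≤ ((m : ℂ) * α).re := by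
    have : (2 : ℝ) ≤ m := by exact_mod_cast hm
    simp only [mul_re, natCast_re, natCast_im, hre, zero_mul, sub_zero]
    linarith
  refine ⟨F, V, hV, hαV, hF, hFν, hFα, hF', ?_, ?_⟩ <;> rw [hF']
  · exact norm_one_sub_one_div_sub_half_le hw
  · exact norm_one_sub_one_div_lt_one (by linarith)
end

section
/- The following are equivalent: (a) every zero of ζ in the critical strip S has real part 1/2 and is simple (the Riemann hypothesis together with the simplicity hypothesis); (b) every zero α of ζ in S, of order m, satisfies |1 − 1/(mα)| = 1, i.e. every such α is an indifferent fixed point of ν_ζ. -/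
/-!
A zero `α` of order `m` has `|1 - 1/(mα)| = 1`, i.e. `|mα - 1| = |mα|`, exactly when
`m · Re α = 1/2`. By the functional equation `1 - α` is a zero in the strip as well, of some
order `m'`, so under (b) also `m' · (1 - Re α) = 1/2`. Since `m, m' ≥ 1` this forces
`Re α = 1/2` and `m = 1`.
-/

open Complex

lemma Complex.norm_one_sub_one_div_eq_one_iff {w : ℂ} (hw : w ≠ 0) :
    ‖1 - 1 / w‖ = 1 ↔ w.re = 1 / 2 := by
  rw [one_sub_div hw, norm_div, div_eq_one_iff_eq (norm_ne_zero_iff.mpr hw),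
    ← sq_eq_sq₀ (norm_nonneg _) (norm_nonneg _), Complex.sq_norm, Complex.sq_norm, normSq_apply,
    normSq_apply]
  simp only [sub_re, one_re, sub_im, one_im, sub_zero]
  constructor <;> intro h <;> linarith

section LocalFactorization

variable {f h : ℂ → ℂ} {α : ℂ} {m : ℕ}

lemma AnalyticAt.analyticOrderAt_eq_of_eqOn_pow_mul {U : Set ℂ} (hf : AnalyticAt ℂ f α)
    (hU : IsOpen U) (hαU : α ∈ U) (hh : DifferentiableOn ℂ h U) (hhα : h α ≠ 0)
    (hfh : ∀ z ∈ U, f z = (z - α) ^ m * h z) :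
    analyticOrderAt f α = m :=
  hf.analyticOrderAt_eq_natCast.mpr ⟨h, hh.analyticAt (hU.mem_nhds hαU), hhα,
    Filter.eventually_of_mem (hU.mem_nhds hαU) hfh⟩

lemma AnalyticAt.exists_eqOn_pow_mul (hf : AnalyticAt ℂ f α) (hm : analyticOrderAt f α = m) :
    ∃ (h : ℂ → ℂ) (U : Set ℂ), IsOpen U ∧ α ∈ U ∧ DifferentiableOn ℂ h U ∧ h α ≠ 0 ∧
      ∀ z ∈ U, f z = (z - α) ^ m * h z := by
  obtain ⟨g, hg, hgα, hfg⟩ := hf.analyticOrderAt_eq_natCast.mp hm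
  obtain ⟨U, hUsub, hU, hαU⟩ := mem_nhds_iff.mp (hfg.and hg.eventually_analyticAt)
  exact ⟨g, U, hU, hαU, fun z hz ↦ (hUsub hz).2.differentiableAt.differentiableWithinAt, hgα,
    fun z hz ↦ (hUsub hz).1⟩

end LocalFactorization

lemma analyticAt_riemannZeta {s : ℂ} (hs : s ≠ 1) : AnalyticAt ℂ riemannZeta s :=
  analyticOn_riemannZeta s hs

lemma analyticOrderAt_riemannZeta_ne_top {s : ℂ} (hs : s ≠ 1) :
    analyticOrderAt riemannZeta s ≠ ⊤ := by
  have h2 : (2 : ℂ) ≠ 1 := by norm_num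
  refine analyticOn_riemannZeta.analyticOrderAt_ne_top_of_isPreconnected
    (isConnected_compl_singleton_of_one_lt_rank (by simp) 1).isPreconnected h2 hs ?_
  rw [(analyticAt_riemannZeta h2).analyticOrderAt_eq_zero.mpr
    (riemannZeta_ne_zero_of_one_le_re (by norm_num))]
  exact ENat.zero_ne_top

lemma one_le_analyticOrderNatAt_riemannZeta {s : ℂ} (hs : s ≠ 1) (hζ : riemannZeta s = 0) :
    1 ≤ analyticOrderNatAt riemannZeta s := by
  rw [Nat.one_le_iff_ne_zero, ← Nat.cast_ne_zero (R := ℕ∞),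
    Nat.cast_analyticOrderNatAt (analyticOrderAt_riemannZeta_ne_top hs)]
  exact (analyticAt_riemannZeta hs).analyticOrderAt_ne_zero.mpr hζ

lemma riemannZeta_one_sub_eq_zero {s : ℂ} (hs₀ : 0 < s.re) (hs₁ : s ≠ 1)
    (hζ : riemannZeta s = 0) : riemannZeta (1 - s) = 0 := by
  have hs : ∀ n : ℕ, s ≠ -n := fun n hn ↦ by
    have := congrArg re hn
    simp only [neg_re, natCast_re] at this
    linarith [(n.cast_nonneg : (0 : ℝ) ≤ n)]
  rw [riemannZeta_one_sub hs hs₁, hζ, mul_zero]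

lemma riemannZeta_exists_eqOn_pow_analyticOrderNatAt_mul {s : ℂ} (hs : s ≠ 1) :
    ∃ (h : ℂ → ℂ) (U : Set ℂ), IsOpen U ∧ s ∈ U ∧ DifferentiableOn ℂ h U ∧ h s ≠ 0 ∧
      ∀ z ∈ U, riemannZeta z = (z - s) ^ analyticOrderNatAt riemannZeta s * h z :=
  (analyticAt_riemannZeta hs).exists_eqOn_pow_mul
    (Nat.cast_analyticOrderNatAt (analyticOrderAt_riemannZeta_ne_top hs)).symm

lemma one_le_analyticOrderNatAt_riemannZeta_and_mul_re_eq_half {β : ℂ} (hβ₀ : 0 < β.re)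
    (hβ₁ : β.re < 1)
    (hβ : ∀ (m : ℕ), 1 ≤ m → ∀ (h : ℂ → ℂ) (U : Set ℂ), IsOpen U → β ∈ U →
      DifferentiableOn ℂ h U → h β ≠ 0 → (∀ z ∈ U, riemannZeta z = (z - β) ^ m * h z) →
      ‖1 - 1 / (m * β)‖ = 1)
    (hζ : riemannZeta β = 0) :
    1 ≤ analyticOrderNatAt riemannZeta β ∧
      (analyticOrderNatAt riemannZeta β : ℝ) * β.re = 1 / 2 := by
  have hβ1 : β ≠ 1 := by rintro rfl; simp at hβ₁
  have hm := one_le_analyticOrderNatAt_riemannZeta hβ1 hζ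
  obtain ⟨g, V, hV, hβV, hg, hgβ, hζg⟩ := riemannZeta_exists_eqOn_pow_analyticOrderNatAt_mul hβ1
  have hmβ : (analyticOrderNatAt riemannZeta β : ℂ) * β ≠ 0 :=
    mul_ne_zero (by norm_cast; omega) (by rintro rfl; simp at hβ₀)
  refine ⟨hm, ?_⟩
  simpa using (norm_one_sub_one_div_eq_one_iff hmβ).mp (hβ _ hm g V hV hβV hg hgβ hζg)

/-- (a) The Riemann hypothesis together with the simplicity hypothesis (every zero of `ζ`
in the critical strip has real part `1/2` and order `1`) holds if and only if
(b) every zero `α` of `ζ` in the critical strip, of order `m`, satisfies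
`|1 - 1/(mα)| = 1`, i.e. is an indifferent fixed point of `ν_ζ`. -/
theorem RH_simplicity_iff_indifferent :
    (∀ (α : ℂ), 0 < α.re → α.re < 1 → riemannZeta α = 0 →
      α.re = 1 / 2 ∧
      ∀ (m : ℕ), 1 ≤ m → ∀ (h : ℂ → ℂ) (U : Set ℂ), IsOpen U → α ∈ U →
        DifferentiableOn ℂ h U → h α ≠ 0 →
        (∀ z ∈ U, riemannZeta z = (z - α) ^ m * h z) → m = 1) ↔
    (∀ (α : ℂ), 0 < α.re → α.re < 1 → ∀ (m : ℕ), 1 ≤ m →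
      ∀ (h : ℂ → ℂ) (U : Set ℂ), IsOpen U → α ∈ U → DifferentiableOn ℂ h U → h α ≠ 0 →
      (∀ z ∈ U, riemannZeta z = (z - α) ^ m * h z) →
      ‖1 - 1 / (m * α)‖ = 1) := by
  constructor
  · intro H α h₀ h₁ m hm h U hU hαU hh hhα hζh
    have hζ : riemannZeta α = 0 := by simpa [zero_pow (by omega : m ≠ 0)] using hζh α hαU
    obtain ⟨hre, hsimple⟩ := H α h₀ h₁ hζ
    obtain rfl := hsimple m hm h U hU hαU hh hhα hζh
    have hα : α ≠ 0 := by rintro rfl; norm_num at hre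
    simpa using (norm_one_sub_one_div_eq_one_iff hα).mpr hre
  · intro H α h₀ h₁ hζ
    have hα : α ≠ 1 := by rintro rfl; simp at h₁
    obtain ⟨hm, hmα⟩ :=
      one_le_analyticOrderNatAt_riemannZeta_and_mul_re_eq_half h₀ h₁ (H α h₀ h₁) hζ
    obtain ⟨hm', hmα'⟩ := one_le_analyticOrderNatAt_riemannZeta_and_mul_re_eq_half
      (by simpa) (by simpa) (H _ (by simpa) (by simpa)) (riemannZeta_one_sub_eq_zero h₀ hα hζ)
    rw [sub_re, one_re] at hmα'
    have hm₁ : (1 : ℝ) ≤ analyticOrderNatAt riemannZeta α := by exact_mod_cast hm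
    have hm₁' : (1 : ℝ) ≤ analyticOrderNatAt riemannZeta (1 - α) := by exact_mod_cast hm'
    have hre : α.re = 1 / 2 := by nlinarith
    refine ⟨hre, fun m _ h U hU hαU hh hhα hζh ↦ ?_⟩
    have hord := (analyticAt_riemannZeta hα).analyticOrderAt_eq_of_eqOn_pow_mul hU hαU hh hhα hζh
    rw [← Nat.cast_analyticOrderNatAt (analyticOrderAt_riemannZeta_ne_top hα), Nat.cast_inj]
      at hord
    rw [← hord]
    exact_mod_cast (by nlinarith : (analyticOrderNatAt riemannZeta α : ℝ) = 1)
end
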